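/- Let G be a finite group and 0 → M → P → Q → 0 an exact sequence of finitely generated G-modules in which P is a permutation module (a free ℤ-module with a ℤ-basis permuted by G). Then the connecting homomorphism induces an isomorphism Ш¹_ω(G, Q) ≅ Ш²_ω(G, M), where Шⁱ_ω(G, −) := ⋂_{g∈G} Ker[Hⁱ(G, −) → Hⁱ(⟨g⟩, −)]. -/

import Mathlib

/-!
The connecting map `δ : H¹(G, Q) → H²(G, M)` of `0 → M → P → Q → 0` commutes with restriction,
`δ_C` is injective for every subgroup `C` with `H¹(C, P) = 0`, and the image of `δ` is the
kernel of `H²(G, M) → H²(G, P)`. So it maps `Ш¹_ω(Q)` injectively to `Ш²_ω(M)`; conversely a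
class of `Ш²_ω(M)` dies in `Ш²_ω(P)`, hence is `δ y`, and `y` restricts to zero on each cyclic
`C` because `δ_C` is injective.

For `P = ℤ[β]` everything is computed coordinatewise via a Shapiro-type argument: a 1-cocycle
with values in `A^β` that vanishes at `(g, b)` whenever `g • b = b` is a coboundary, and for
finite `H` and torsion-free `A` every 1-cocycle does vanish there (it is additive on the finite
stabilizers). For a 2-cocycle `c`, averaging gives a rational primitive `φ`, whose reduction
mod `ℤ` is a 1-cocycle with values in `(ℚ/ℤ)^β`. If `c` is a coboundary on every cyclic
subgroup, `φ g b` is an integer whenever `g • b = b`, so `φ mod ℤ` is a coboundary and `c` is an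
integral one.
-/

open groupCohomology

section Helper

variable {k G G' : Type} [CommRing k] [Group G] [Group G']

/-- Restriction of a representation along a group homomorphism. -/
noncomputable def resRep (φ : G' →* G) (A : Rep.{0} k G) : Rep.{0} k G' := Rep.of (A.ρ.comp φ)

/-- The 1-coboundaries, as a submodule of the 1-cocycles (old Mathlib `oneCoboundaries`). -/
def oneCoboundaries (A : Rep.{0} k G) : Submodule k (cocycles₁ A) :=
  (coboundaries₁ A).comap (cocycles₁ A).subtype

/-- The 2-coboundaries, as a submodule of the 2-cocycles (old Mathlib `twoCoboundaries`). -/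
def twoCoboundaries (A : Rep.{0} k G) : Submodule k (cocycles₂ A) :=
  (coboundaries₂ A).comap (cocycles₂ A).subtype

/-- Old Mathlib `groupCohomology.H1`: the quotient `Z¹ / B¹`. -/
abbrev oldH1 (A : Rep.{0} k G) := cocycles₁ A ⧸ oneCoboundaries A

/-- Old Mathlib `groupCohomology.H2`: the quotient `Z² / B²`. -/
abbrev oldH2 (A : Rep.{0} k G) := cocycles₂ A ⧸ twoCoboundaries A

theorem mem_oneCoboundaries_iff {A : Rep.{0} k G} (f : cocycles₁ A) :
    f ∈ oneCoboundaries A ↔ ∃ x : A, ∀ g : G, A.ρ g x - x = f g := by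
  simp only [oneCoboundaries, coboundaries₁, Submodule.mem_comap, LinearMap.mem_range,
    funext_iff]
  rfl

theorem mem_twoCoboundaries_iff {A : Rep.{0} k G} (f : cocycles₂ A) :
    f ∈ twoCoboundaries A ↔ ∃ x : G → A, ∀ g h : G,
      A.ρ g (x h) - x (g * h) + x g = f (g, h) := by
  simp only [twoCoboundaries, coboundaries₂, Submodule.mem_comap, LinearMap.mem_range,
    funext_iff, Prod.forall]
  rfl

/-- Restriction of 1-cocycles along a group homomorphism. -/
noncomputable def resOneCocycles (φ : G' →* G) (A : Rep.{0} k G) :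
    cocycles₁ A →ₗ[k] cocycles₁ (resRep φ A) where
  toFun f := ⟨fun g => f.1 (φ g), by
      refine (mem_cocycles₁_iff (A := resRep φ A) _).2 ?_
      intro g h
      have := (mem_cocycles₁_iff (A := A) f.1).1 f.2 (φ g) (φ h)
      simp only [map_mul]
      exact this⟩
  map_add' f g := rfl
  map_smul' r f := rfl

/-- The restriction map on first group cohomology along a group homomorphism. -/
noncomputable def resH1 (φ : G' →* G) (A : Rep.{0} k G) :
    oldH1 A →ₗ[k] oldH1 (resRep φ A) :=
  Submodule.mapQ _ _ (resOneCocycles φ A) (by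
    intro f hf
    rw [Submodule.mem_comap, mem_oneCoboundaries_iff]
    rw [mem_oneCoboundaries_iff] at hf
    obtain ⟨x, hx⟩ := hf
    refine ⟨x, fun g => ?_⟩
    have := hx (φ g)
    exact this)

/-- `Ш¹_ω(G, A)`: classes in `H¹(G, A)` restricting to `0` on every cyclic subgroup. -/
noncomputable def Sha1 (A : Rep.{0} k G) : Submodule k (oldH1 A) :=
  ⨅ g : G, LinearMap.ker (resH1 (Subgroup.zpowers g).subtype A)

/-- Restriction of 2-cocycles along a group homomorphism. -/
noncomputable def resTwoCocycles (φ : G' →* G) (A : Rep.{0} k G) :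
    cocycles₂ A →ₗ[k] cocycles₂ (resRep φ A) where
  toFun f := ⟨fun p => f.1 (φ p.1, φ p.2), by
      refine (mem_cocycles₂_iff (A := resRep φ A) _).2 ?_
      intro g h j
      have := (mem_cocycles₂_iff (A := A) f.1).1 f.2 (φ g) (φ h) (φ j)
      simp only [map_mul]
      exact this⟩
  map_add' f g := rfl
  map_smul' r f := rfl

/-- The restriction map on second group cohomology along a group homomorphism. -/
noncomputable def resH2 (φ : G' →* G) (A : Rep.{0} k G) :
    oldH2 A →ₗ[k] oldH2 (resRep φ A) :=
  Submodule.mapQ _ _ (resTwoCocycles φ A) (by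
    intro f hf
    rw [Submodule.mem_comap, mem_twoCoboundaries_iff]
    rw [mem_twoCoboundaries_iff] at hf
    obtain ⟨x, hx⟩ := hf
    refine ⟨fun g' => x (φ g'), fun g h => ?_⟩
    have := hx (φ g) (φ h)
    simp only [map_mul]
    exact this)

/-- `Ш²_ω(G, A)`: classes in `H²(G, A)` restricting to `0` on every cyclic subgroup. -/
noncomputable def Sha2 (A : Rep.{0} k G) : Submodule k (oldH2 A) :=
  ⨅ g : G, LinearMap.ker (resH2 (Subgroup.zpowers g).subtype A)

end Helper

section Cochains

variable {k G : Type} [CommRing k] [Group G]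

lemma mem_coboundaries₁_iff {A : Rep.{0} k G} (f : G → A) :
    f ∈ coboundaries₁ A ↔ ∃ x : A, ∀ g, A.ρ g x - x = f g := by
  simp only [coboundaries₁, LinearMap.mem_range, funext_iff]
  rfl

lemma mem_coboundaries₂_iff {A : Rep.{0} k G} (f : G × G → A) :
    f ∈ coboundaries₂ A ↔ ∃ x : G → A, ∀ g h, A.ρ g (x h) - x (g * h) + x g = f (g, h) := by
  simp only [coboundaries₂, LinearMap.mem_range, funext_iff, Prod.forall]
  rfl

lemma mk_mem_sha1_iff {A : Rep.{0} k G} (f : cocycles₁ A) :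
    Submodule.Quotient.mk f ∈ Sha1 A ↔ ∀ g : G,
      (fun s : Subgroup.zpowers g => f s) ∈
        coboundaries₁ (resRep (Subgroup.zpowers g).subtype A) := by
  simp only [Sha1, Submodule.mem_iInf, LinearMap.mem_ker, resH1, Submodule.mapQ_apply,
    Submodule.Quotient.mk_eq_zero]
  rfl

lemma mk_mem_sha2_iff {A : Rep.{0} k G} (c : cocycles₂ A) :
    Submodule.Quotient.mk c ∈ Sha2 A ↔ ∀ g : G,
      (fun st : Subgroup.zpowers g × Subgroup.zpowers g => c (st.1, st.2)) ∈
        coboundaries₂ (resRep (Subgroup.zpowers g).subtype A) := by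
  simp only [Sha2, Submodule.mem_iInf, LinearMap.mem_ker, resH2, Submodule.mapQ_apply,
    Submodule.Quotient.mk_eq_zero]
  rfl

variable {V W : Type} [AddCommGroup V] [Module k V] [AddCommGroup W] [Module k W]
  {ρ : Representation k G V} {σ : Representation k G W}

lemma comp_mem_cocycles₂ {φ : V →ₗ[k] W} (hφ : ∀ g x, φ (ρ g x) = σ g (φ x))
    {c : G × G → V} (hc : c ∈ cocycles₂ (Rep.of ρ)) :
    (fun gh => φ (c gh)) ∈ cocycles₂ (Rep.of σ) := by
  refine (mem_cocycles₂_iff _).2 fun g h j => ?_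
  simp only [← map_add, ← hφ, (mem_cocycles₂_iff (A := Rep.of ρ) c).1 hc g h j]

lemma comp_mem_coboundaries₂ {φ : V →ₗ[k] W} (hφ : ∀ g x, φ (ρ g x) = σ g (φ x))
    {c : G × G → V} (hc : c ∈ coboundaries₂ (Rep.of ρ)) :
    (fun gh => φ (c gh)) ∈ coboundaries₂ (Rep.of σ) := by
  obtain ⟨x, hx⟩ := (mem_coboundaries₂_iff (A := Rep.of ρ) c).1 hc
  refine (mem_coboundaries₂_iff _).2 ⟨fun g => φ (x g), fun g h => ?_⟩
  simp only [← hφ, ← map_sub, ← map_add, ← hx g h]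

end Cochains

section Connecting

variable {k G : Type} [CommRing k] [Group G]

structure RepShortExact {VM VP VQ : Type} [AddCommGroup VM] [Module k VM] [AddCommGroup VP]
    [Module k VP] [AddCommGroup VQ] [Module k VQ] (ρM : Representation k G VM)
    (ρP : Representation k G VP) (ρQ : Representation k G VQ) where
  i : VM →ₗ[k] VP
  p : VP →ₗ[k] VQ
  i_comm : ∀ g x, i (ρM g x) = ρP g (i x)
  p_comm : ∀ g x, p (ρP g x) = ρQ g (p x)
  injective_i : Function.Injective i
  surjective_p : Function.Surjective p
  range_i_eq_ker_p : LinearMap.range i = LinearMap.ker p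

namespace RepShortExact

variable {VM VP VQ : Type} [AddCommGroup VM] [Module k VM] [AddCommGroup VP] [Module k VP]
  [AddCommGroup VQ] [Module k VQ] {ρM : Representation k G VM} {ρP : Representation k G VP}
  {ρQ : Representation k G VQ} (E : RepShortExact ρM ρP ρQ)

lemma p_i (x : VM) : E.p (E.i x) = 0 := by
  rw [← LinearMap.mem_ker, ← E.range_i_eq_ker_p]
  exact LinearMap.mem_range_self _ x

lemma exists_i_eq {y : VP} (hy : E.p y = 0) : ∃ x, E.i x = y := by
  rwa [← LinearMap.mem_range, E.range_i_eq_ker_p]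

def comp {H : Type} [Group H] (φ : H →* G) :
    RepShortExact (ρM.comp φ) (ρP.comp φ) (ρQ.comp φ) where
  __ := E
  i_comm g := E.i_comm (φ g)
  p_comm g := E.p_comm (φ g)

/-- `c` is a 2-cocycle representing `δ [f]`: `i ∘ c` is the coboundary of a lift of `f` to `P`. -/
def IsConnecting (f : G → VQ) (c : G × G → VM) : Prop :=
  ∃ U : G → VP, (∀ g, E.p (U g) = f g) ∧ ∀ g h, E.i (c (g, h)) = ρP g (U h) - U (g * h) + U g

variable {E}

lemma exists_isConnecting {f : G → VQ} (hf : f ∈ cocycles₁ (Rep.of ρQ)) :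
    ∃ c, E.IsConnecting f c := by
  choose U hU using fun g => E.surjective_p (f g)
  have hker : ∀ gh : G × G, E.p (ρP gh.1 (U gh.2) - U (gh.1 * gh.2) + U gh.1) = 0 := by
    rintro ⟨g, h⟩
    rw [map_add, map_sub, E.p_comm, hU, hU, hU, (mem_cocycles₁_iff (A := Rep.of ρQ) f).1 hf g h]
    simp
  choose c hc using fun gh => E.exists_i_eq (hker gh)
  exact ⟨c, U, hU, fun g h => hc (g, h)⟩

namespace IsConnecting

variable {f f' : G → VQ} {c c' : G × G → VM}

lemma mem_cocycles₂ (h : E.IsConnecting f c) : c ∈ cocycles₂ (Rep.of ρM) := by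
  obtain ⟨U, -, hU⟩ := h
  refine (mem_cocycles₂_iff (A := Rep.of ρM) c).2 fun g h j => E.injective_i ?_
  simp only [map_add, E.i_comm, hU, map_sub, map_mul, Module.End.mul_apply, mul_assoc]
  abel

lemma add (h : E.IsConnecting f c) (h' : E.IsConnecting f' c') :
    E.IsConnecting (f + f') (c + c') := by
  obtain ⟨U, hUf, hU⟩ := h
  obtain ⟨U', hUf', hU'⟩ := h'
  refine ⟨U + U', fun g => by simp [hUf, hUf'], fun g h => ?_⟩
  simp only [Pi.add_apply, map_add, hU, hU']
  abel

lemma smul (h : E.IsConnecting f c) (r : k) : E.IsConnecting (r • f) (r • c) := by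
  obtain ⟨U, hUf, hU⟩ := h
  refine ⟨r • U, fun g => by simp [hUf], fun g h => ?_⟩
  simp only [Pi.smul_apply, map_smul, hU, smul_add, smul_sub]

lemma sub (h : E.IsConnecting f c) (h' : E.IsConnecting f' c') :
    E.IsConnecting (f - f') (c - c') := by
  simpa [sub_eq_add_neg] using h.add (h'.smul (-1))

lemma comp (h : E.IsConnecting f c) {H : Type} [Group H] (φ : H →* G) :
    (E.comp φ).IsConnecting (fun s => f (φ s)) (fun st => c (φ st.1, φ st.2)) := by
  obtain ⟨U, hUf, hU⟩ := h
  exact ⟨fun s => U (φ s), fun s => hUf (φ s), fun s t => by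
    change E.i _ = _
    simpa using hU (φ s) (φ t)⟩

lemma mem_coboundaries₂ (h : E.IsConnecting f c) (hf : f ∈ coboundaries₁ (Rep.of ρQ)) :
    c ∈ coboundaries₂ (Rep.of ρM) := by
  obtain ⟨U, hUf, hU⟩ := h
  obtain ⟨q, hq⟩ := (mem_coboundaries₁_iff (A := Rep.of ρQ) f).1 hf
  obtain ⟨x, rfl⟩ := E.surjective_p q
  have hker : ∀ g, E.p (U g - (ρP g x - x)) = 0 := fun g => by
    rw [map_sub, map_sub, E.p_comm, hUf, ← hq g, sub_self]
  choose m hm using fun g => E.exists_i_eq (hker g)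
  refine (mem_coboundaries₂_iff (A := Rep.of ρM) c).2 ⟨m, fun g h => E.injective_i ?_⟩
  simp only [map_add, map_sub, E.i_comm, hm, hU, map_mul, Module.End.mul_apply]
  abel

lemma mem_coboundaries₁ (h : E.IsConnecting f c)
    (hP : cocycles₁ (Rep.of ρP) ≤ coboundaries₁ (Rep.of ρP)) (hc : c ∈ coboundaries₂ (Rep.of ρM)) :
    f ∈ coboundaries₁ (Rep.of ρQ) := by
  obtain ⟨U, hUf, hU⟩ := h
  obtain ⟨m, hm⟩ := (mem_coboundaries₂_iff (A := Rep.of ρM) c).1 hc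
  have hV : (fun g => U g - E.i (m g)) ∈ cocycles₁ (Rep.of ρP) := by
    refine (mem_cocycles₁_iff (A := Rep.of ρP) _).2 fun g h => ?_
    have := hU g h
    rw [← hm, map_add, map_sub, E.i_comm] at this
    rw [map_sub]
    linear_combination (norm := module) this
  obtain ⟨x, hx⟩ := (mem_coboundaries₁_iff (A := Rep.of ρP) _).1 (hP hV)
  refine (mem_coboundaries₁_iff (A := Rep.of ρQ) f).2 ⟨E.p x, fun g => ?_⟩
  rw [Rep.of_ρ, ← E.p_comm, ← map_sub, show ρP g x - x = U g - E.i (m g) from hx g, map_sub, hUf,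
    E.p_i, sub_zero]

end IsConnecting

lemma exists_isConnecting_of_mem_coboundaries₂ {c : G × G → VM}
    (hc : (fun gh => E.i (c gh)) ∈ coboundaries₂ (Rep.of ρP)) :
    ∃ f ∈ cocycles₁ (Rep.of ρQ), E.IsConnecting f c := by
  obtain ⟨U, hU⟩ := (mem_coboundaries₂_iff (A := Rep.of ρP) _).1 hc
  refine ⟨fun g => E.p (U g), (mem_cocycles₁_iff (A := Rep.of ρQ) _).2 fun g h => ?_,
    U, fun _ => rfl, fun g h => (hU g h).symm⟩
  have := congrArg E.p (hU g h)
  rw [E.p_i, map_add, map_sub, E.p_comm] at this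
  linear_combination (norm := module) -this

variable (E)

noncomputable def connectingCocycle (f : cocycles₁ (Rep.of ρQ)) : cocycles₂ (Rep.of ρM) :=
  ⟨(exists_isConnecting (E := E) f.2).choose,
    (exists_isConnecting (E := E) f.2).choose_spec.mem_cocycles₂⟩

lemma isConnecting_connectingCocycle (f : cocycles₁ (Rep.of ρQ)) :
    E.IsConnecting f (E.connectingCocycle f) :=
  (exists_isConnecting f.2).choose_spec

variable {E}

lemma mk_eq_mk_of_isConnecting {f : G → VQ} {c c' : cocycles₂ (Rep.of ρM)}
    (h : E.IsConnecting f c) (h' : E.IsConnecting f c') :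
    (Submodule.Quotient.mk c : oldH2 (Rep.of ρM)) = Submodule.Quotient.mk c' := by
  refine (Submodule.Quotient.eq _).2 ((h.sub h').mem_coboundaries₂ ?_)
  rw [sub_self]
  exact zero_mem _

variable (E)

noncomputable def connectingCocycles₁ : cocycles₁ (Rep.of ρQ) →ₗ[k] oldH2 (Rep.of ρM) where
  toFun f := Submodule.Quotient.mk (E.connectingCocycle f)
  map_add' f f' := by
    rw [← Submodule.Quotient.mk_add]
    exact mk_eq_mk_of_isConnecting (E.isConnecting_connectingCocycle _)
      ((E.isConnecting_connectingCocycle f).add (E.isConnecting_connectingCocycle f'))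
  map_smul' r f := by
    rw [← Submodule.Quotient.mk_smul]
    exact mk_eq_mk_of_isConnecting (E.isConnecting_connectingCocycle _)
      ((E.isConnecting_connectingCocycle f).smul r)

noncomputable def connectingH1 : oldH1 (Rep.of ρQ) →ₗ[k] oldH2 (Rep.of ρM) :=
  (oneCoboundaries (Rep.of ρQ)).liftQ E.connectingCocycles₁ fun f hf =>
    (Submodule.Quotient.mk_eq_zero _).2 ((E.isConnecting_connectingCocycle f).mem_coboundaries₂ hf)

variable {E}

lemma connectingH1_mk {f : cocycles₁ (Rep.of ρQ)} {c : cocycles₂ (Rep.of ρM)}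
    (h : E.IsConnecting f c) : E.connectingH1 (Submodule.Quotient.mk f) = Submodule.Quotient.mk c :=
  mk_eq_mk_of_isConnecting (E.isConnecting_connectingCocycle f) h

lemma connectingH1_injective (hP : cocycles₁ (Rep.of ρP) ≤ coboundaries₁ (Rep.of ρP)) :
    Function.Injective E.connectingH1 := by
  refine (injective_iff_map_eq_zero _).2 fun y hy => ?_
  obtain ⟨f, rfl⟩ := Submodule.Quotient.mk_surjective _ y
  rw [connectingH1_mk (E.isConnecting_connectingCocycle f), Submodule.Quotient.mk_eq_zero] at hy
  exact (Submodule.Quotient.mk_eq_zero _).2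
    ((E.isConnecting_connectingCocycle f).mem_coboundaries₁ hP hy)

lemma connectingH1_mem_sha2 {y : oldH1 (Rep.of ρQ)} (hy : y ∈ Sha1 (Rep.of ρQ)) :
    E.connectingH1 y ∈ Sha2 (Rep.of ρM) := by
  obtain ⟨f, rfl⟩ := Submodule.Quotient.mk_surjective _ y
  rw [connectingH1_mk (E.isConnecting_connectingCocycle f), mk_mem_sha2_iff]
  exact fun g => ((E.isConnecting_connectingCocycle f).comp (Subgroup.zpowers g).subtype)
    |>.mem_coboundaries₂ ((mk_mem_sha1_iff f).1 hy g)

lemma exists_connectingH1_eq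
    (hP : ∀ g : G, cocycles₁ (Rep.of (ρP.comp (Subgroup.zpowers g).subtype)) ≤
      coboundaries₁ (Rep.of (ρP.comp (Subgroup.zpowers g).subtype)))
    (hP2 : Sha2 (Rep.of ρP) = ⊥) {z : oldH2 (Rep.of ρM)} (hz : z ∈ Sha2 (Rep.of ρM)) :
    ∃ y ∈ Sha1 (Rep.of ρQ), E.connectingH1 y = z := by
  obtain ⟨c, rfl⟩ := Submodule.Quotient.mk_surjective _ z
  have hres := (mk_mem_sha2_iff c).1 hz
  have hic : (Submodule.Quotient.mk ⟨_, comp_mem_cocycles₂ E.i_comm c.2⟩ : oldH2 (Rep.of ρP)) ∈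
      Sha2 (Rep.of ρP) :=
    (mk_mem_sha2_iff _).2 fun g =>
      comp_mem_coboundaries₂ (E.comp (Subgroup.zpowers g).subtype).i_comm (hres g)
  rw [hP2, Submodule.mem_bot, Submodule.Quotient.mk_eq_zero] at hic
  obtain ⟨f, hf, hfc⟩ := exists_isConnecting_of_mem_coboundaries₂ hic
  exact ⟨Submodule.Quotient.mk ⟨f, hf⟩,
    (mk_mem_sha1_iff _).2 fun g => (hfc.comp _).mem_coboundaries₁ (hP g) (hres g),
    connectingH1_mk hfc⟩

variable (E)

noncomputable def sha1EquivSha2 (hP : cocycles₁ (Rep.of ρP) ≤ coboundaries₁ (Rep.of ρP))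
    (hPcyc : ∀ g : G, cocycles₁ (Rep.of (ρP.comp (Subgroup.zpowers g).subtype)) ≤
      coboundaries₁ (Rep.of (ρP.comp (Subgroup.zpowers g).subtype)))
    (hP2 : Sha2 (Rep.of ρP) = ⊥) : Sha1 (Rep.of ρQ) ≃ₗ[k] Sha2 (Rep.of ρM) :=
  LinearEquiv.ofBijective (E.connectingH1.restrict fun _ => connectingH1_mem_sha2)
    ⟨fun _ _ h => Subtype.ext (connectingH1_injective hP (congrArg Subtype.val h)),
      fun z =>
        let ⟨y, hy, hyz⟩ := exists_connectingH1_eq hPcyc hP2 z.2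
        ⟨⟨y, hy⟩, Subtype.ext hyz⟩⟩

end RepShortExact

end Connecting

section Coordinates

variable {H β A : Type*} [Group H] [MulAction H β] [AddCommGroup A]

lemma cocycle_apply_eq_zero_of_smul_eq [Finite H] [IsAddTorsionFree A] {F : H → β → A}
    (hF : ∀ g h b, F (g * h) b = F h (g⁻¹ • b) + F g b) {g : H} {b : β} (hgb : g • b = b) :
    F g b = 0 := by
  have hg_inv : g⁻¹ • b = b := inv_smul_eq_iff.2 hgb.symm
  have one_apply : F 1 b = 0 := by simpa using hF 1 1 b
  have pow_apply : ∀ n : ℕ, F (g ^ n) b = n • F g b := by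
    intro n
    induction n with
    | zero => rw [pow_zero, one_apply, zero_nsmul]
    | succ n ih => rw [pow_succ', hF, hg_inv, ih, succ_nsmul]
  have := pow_apply (orderOf g)
  rw [pow_orderOf_eq_one, one_apply] at this
  exact (nsmul_eq_zero_iff_right (orderOf_pos g).ne').1 this.symm

lemma exists_eq_sub_of_cocycle_of_stabilizer {F : H → β → A}
    (hF : ∀ g h b, F (g * h) b = F h (g⁻¹ • b) + F g b)
    (hstab : ∀ g b, g • b = b → F g b = 0) :
    ∃ v : β → A, ∀ g b, F g b = v (g⁻¹ • b) - v b := by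
  have eq_of_smul_eq : ∀ (a a' : H) (x : β), a • x = a' • x → F a (a • x) = F a' (a' • x) := by
    intro a a' x h
    have hfix : (a⁻¹ * a') • x = x := by rw [mul_smul, ← h, inv_smul_smul]
    have e := hF a (a⁻¹ * a') (a' • x)
    rw [mul_inv_cancel_left, ← h, inv_smul_smul, hstab _ _ hfix, zero_add] at e
    rw [← h, e]
  let R : β → β := fun b => (Quotient.mk (MulAction.orbitRel H β) b).out
  have R_smul : ∀ (g : H) b, R (g • b) = R b := fun g b =>
    congrArg Quotient.out (Quotient.sound (MulAction.mem_orbit b g))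
  have exists_smul_eq_R : ∀ b, ∃ t : H, t • b = R b := fun b =>
    MulAction.mem_orbit_iff.1 (Quotient.mk_out (s := MulAction.orbitRel H β) b)
  choose τ hτ using exists_smul_eq_R
  refine ⟨fun b => F (τ b) (τ b • b), fun g b => ?_⟩
  have e := hF (τ b) g (τ b • b)
  rw [inv_smul_smul] at e
  have : (τ b * g) • (g⁻¹ • b) = τ (g⁻¹ • b) • (g⁻¹ • b) := by
    rw [mul_smul, smul_inv_smul, hτ, hτ, R_smul]
  change F g b = F (τ (g⁻¹ • b)) (τ (g⁻¹ • b) • g⁻¹ • b) - F (τ b) (τ b • b)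
  rw [← eq_of_smul_eq _ _ _ this, mul_smul, smul_inv_smul, e]
  abel

lemma exists_eq_sub_of_cocycle [Finite H] [IsAddTorsionFree A] {F : H → β → A}
    (hF : ∀ g h b, F (g * h) b = F h (g⁻¹ • b) + F g b) :
    ∃ v : β → A, ∀ g b, F g b = v (g⁻¹ • b) - v b :=
  exists_eq_sub_of_cocycle_of_stabilizer hF fun _ _ => cocycle_apply_eq_zero_of_smul_eq hF

lemma exists_rat_primitive [Finite H] (c : H × H → β → ℚ)
    (hc : ∀ g h j b, c (g * h, j) b + c (g, h) b = c (h, j) (g⁻¹ • b) + c (g, h * j) b) :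
    ∃ φ : H → β → ℚ, ∀ g h b, φ h (g⁻¹ • b) - φ (g * h) b + φ g b = c (g, h) b := by
  classical
  cases nonempty_fintype H
  have hN : (Fintype.card H : ℚ) ≠ 0 := Nat.cast_ne_zero.2 Fintype.card_ne_zero
  refine ⟨fun g b => (∑ j, c (g, j) b) / Fintype.card H, fun g h b => ?_⟩
  have hsum := Finset.sum_congr rfl (fun j (_ : j ∈ Finset.univ) => hc g h j b)
  have reindex : ∑ j, c (g, h * j) b = ∑ j, c (g, j) b :=
    Equiv.sum_comp (Equiv.mulLeft h) fun j => c (g, j) b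
  rw [Finset.sum_add_distrib, Finset.sum_add_distrib, Finset.sum_const, Finset.card_univ,
    nsmul_eq_mul, reindex] at hsum
  field_simp
  linear_combination -hsum

lemma exists_int_primitive_of_stabilizer (c : H × H → β → ℤ) (φ : H → β → ℚ)
    (hφ : ∀ g h b, φ h (g⁻¹ • b) - φ (g * h) b + φ g b = c (g, h) b)
    (hstab : ∀ g b, g • b = b → ∃ n : ℤ, φ g b = n) :
    ∃ m : H → β → ℤ, ∀ g h b, m h (g⁻¹ • b) - m (g * h) b + m g b = c (g, h) b := by
  let π := QuotientAddGroup.mk' (Int.castAddHom ℚ).range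
  have π_eq_zero : ∀ x : ℚ, π x = 0 ↔ ∃ n : ℤ, x = n := fun x => by
    rw [QuotientAddGroup.mk'_apply, QuotientAddGroup.eq_zero_iff, AddMonoidHom.mem_range]
    exact ⟨fun ⟨n, hn⟩ => ⟨n, hn.symm⟩, fun ⟨n, hn⟩ => ⟨n, hn.symm⟩⟩
  have hcocycle : ∀ g h b, π (φ (g * h) b) = π (φ h (g⁻¹ • b)) + π (φ g b) := by
    intro g h b
    rw [← map_add, ← sub_eq_zero, ← map_sub, π_eq_zero]
    exact ⟨-c (g, h) b, by push_cast; linear_combination -hφ g h b⟩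
  obtain ⟨v, hv⟩ := exists_eq_sub_of_cocycle_of_stabilizer hcocycle fun g b hgb => by
    obtain ⟨n, hn⟩ := hstab g b hgb
    exact (π_eq_zero _).2 ⟨n, hn⟩
  choose w hw using fun b => QuotientAddGroup.mk'_surjective _ (v b)
  have integral : ∀ g b, ∃ n : ℤ, φ g b - (w (g⁻¹ • b) - w b) = n := by
    intro g b
    rw [← π_eq_zero, map_sub, map_sub, hw, hw, hv, sub_self]
  choose m hm using integral
  refine ⟨m, fun g h b => Int.cast_injective (α := ℚ) ?_⟩
  push_cast
  rw [← hm, ← hm, ← hm, mul_inv_rev, mul_smul]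
  linear_combination hφ g h b

lemma exists_int_eq_of_smul_eq {c : H × H → β → ℤ} {φ : H → β → ℚ}
    (hφ : ∀ g h b, φ h (g⁻¹ • b) - φ (g * h) b + φ g b = c (g, h) b)
    {S : Subgroup H} [Finite S] (u : S → β → ℤ)
    (hu : ∀ s t b, u t (s⁻¹ • b) - u (s * t) b + u s b = c (s, t) b)
    {s : S} {b : β} (hsb : s • b = b) : ∃ n : ℤ, φ s b = n := by
  have hcocycle : ∀ s t : S, ∀ b, φ ↑(s * t) b - u (s * t) b
      = (φ t (s⁻¹ • b) - u t (s⁻¹ • b)) + (φ s b - u s b) := by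
    intro s t b
    have hφst := hφ s t b
    have hust : ((u t (s⁻¹ • b) - u (s * t) b + u s b : ℤ) : ℚ) = c (s, t) b := by
      exact_mod_cast hu s t b
    rw [← Subgroup.coe_inv, ← Subgroup.smul_def] at hφst
    push_cast at hust ⊢
    linear_combination -hφst + hust
  refine ⟨u s b, sub_eq_zero.1 ?_⟩
  exact cocycle_apply_eq_zero_of_smul_eq (F := fun (s : S) b => φ s b - u s b) hcocycle hsb

lemma exists_int_primitive_of_forall_zpowers [Finite H] (c : H × H → β → ℤ)
    (hc : ∀ g h j b, c (g * h, j) b + c (g, h) b = c (h, j) (g⁻¹ • b) + c (g, h * j) b)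
    (hres : ∀ g : H, ∃ u : Subgroup.zpowers g → β → ℤ,
      ∀ s t b, u t (s⁻¹ • b) - u (s * t) b + u s b = c (s, t) b) :
    ∃ m : H → β → ℤ, ∀ g h b, m h (g⁻¹ • b) - m (g * h) b + m g b = c (g, h) b := by
  obtain ⟨φ, hφ⟩ := exists_rat_primitive (fun gh b => (c gh b : ℚ)) fun g h j b => by
    exact_mod_cast hc g h j b
  refine exists_int_primitive_of_stabilizer c φ hφ fun g b hgb => ?_
  obtain ⟨u, hu⟩ := hres g
  exact exists_int_eq_of_smul_eq hφ u hu (s := ⟨g, Subgroup.mem_zpowers g⟩) hgb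

end Coordinates

section PermutationModule

noncomputable def permRep (k H β : Type*) [CommSemiring k] [Monoid H] [MulAction H β] :
    Representation k H (β →₀ k) where
  toFun g := Finsupp.lmapDomain k k (g • ·)
  map_one' := by ext; simp
  map_mul' g h := by ext; simp [mul_smul]

variable {k H β : Type} [CommRing k] [Group H] [MulAction H β]

lemma permRep_apply_apply (g : H) (x : β →₀ k) (b : β) :
    permRep k H β g x b = x (g⁻¹ • b) := by
  change Finsupp.mapDomain (g • ·) x b = x (g⁻¹ • b)
  conv_lhs => rw [← smul_inv_smul g b]
  exact Finsupp.mapDomain_apply (MulAction.injective g) x (g⁻¹ • b)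

lemma mem_cocycles₁_permRep_iff (f : H → β →₀ k) :
    f ∈ cocycles₁ (Rep.of (permRep k H β)) ↔
      ∀ g h b, f (g * h) b = f h (g⁻¹ • b) + f g b := by
  simp only [mem_cocycles₁_iff, Finsupp.ext_iff, Finsupp.add_apply, permRep_apply_apply]

lemma mem_coboundaries₁_permRep_iff [Finite β] (f : H → β →₀ k) :
    f ∈ coboundaries₁ (Rep.of (permRep k H β)) ↔
      ∃ v : β → k, ∀ g b, f g b = v (g⁻¹ • b) - v b := by
  simp only [mem_coboundaries₁_iff, Finsupp.ext_iff, Finsupp.sub_apply, permRep_apply_apply]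
  exact ⟨fun ⟨x, hx⟩ => ⟨x, fun g b => (hx g b).symm⟩,
    fun ⟨v, hv⟩ => ⟨Finsupp.equivFunOnFinite.symm v, fun g b => (hv g b).symm⟩⟩

lemma mem_cocycles₂_permRep_iff (c : H × H → β →₀ k) :
    c ∈ cocycles₂ (Rep.of (permRep k H β)) ↔
      ∀ g h j b, c (g * h, j) b + c (g, h) b = c (h, j) (g⁻¹ • b) + c (g, h * j) b := by
  simp only [mem_cocycles₂_iff, Finsupp.ext_iff, Finsupp.add_apply, permRep_apply_apply]

lemma mem_coboundaries₂_permRep_iff [Finite β] (c : H × H → β →₀ k) :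
    c ∈ coboundaries₂ (Rep.of (permRep k H β)) ↔
      ∃ m : H → β → k, ∀ g h b, m h (g⁻¹ • b) - m (g * h) b + m g b = c (g, h) b := by
  simp only [mem_coboundaries₂_iff, Finsupp.ext_iff, Finsupp.add_apply,
    Finsupp.sub_apply, permRep_apply_apply]
  exact ⟨fun ⟨x, hx⟩ => ⟨fun g => x g, hx⟩,
    fun ⟨m, hm⟩ => ⟨fun g => Finsupp.equivFunOnFinite.symm (m g), hm⟩⟩

theorem cocycles₁_le_coboundaries₁_permRep [Finite H] [Finite β] [IsAddTorsionFree k] :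
    cocycles₁ (Rep.of (permRep k H β)) ≤ coboundaries₁ (Rep.of (permRep k H β)) := fun f hf =>
  (mem_coboundaries₁_permRep_iff f).2 <|
    exists_eq_sub_of_cocycle (F := fun g b => f g b) ((mem_cocycles₁_permRep_iff f).1 hf)

theorem sha2_permRep_eq_bot [Finite H] [Finite β] : Sha2 (Rep.of (permRep ℤ H β)) = ⊥ := by
  refine (Submodule.eq_bot_iff _).2 fun z hz => ?_
  obtain ⟨c, rfl⟩ := Submodule.Quotient.mk_surjective _ z
  rw [Submodule.Quotient.mk_eq_zero]
  refine (mem_coboundaries₂_permRep_iff (c : H × H → β →₀ ℤ)).2 ?_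
  refine exists_int_primitive_of_forall_zpowers (fun gh b => c gh b)
    ((mem_cocycles₂_permRep_iff _).1 c.2) fun g => ?_
  exact (mem_coboundaries₂_permRep_iff _).1 ((mk_mem_sha2_iff c).1 hz g)

end PermutationModule

theorem sha1_iso_sha2_of_permutation_extension_general
    (G : Type) [Group G] [Finite G]
    (β : Type) [Fintype β] [MulAction G β]
    (VM VQ : Type) [AddCommGroup VM] [AddCommGroup VQ]
    (ρM : Representation ℤ G VM) (ρQ : Representation ℤ G VQ)
    (i : VM →ₗ[ℤ] (β →₀ ℤ)) (p : (β →₀ ℤ) →ₗ[ℤ] VQ)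
    (hi : ∀ (g : G) (x : VM),
      i (ρM g x) = Finsupp.lmapDomain ℤ ℤ (g • ·) (i x))
    (hp : ∀ (g : G) (x : β →₀ ℤ),
      p (Finsupp.lmapDomain ℤ ℤ (g • ·) x) = ρQ g (p x))
    (hinj : Function.Injective i) (hsurj : Function.Surjective p)
    (hexact : LinearMap.range i = LinearMap.ker p) :
    Nonempty (Sha1 (Rep.of ρQ) ≃ₗ[ℤ] Sha2 (Rep.of ρM)) := by
  let E : RepShortExact ρM (permRep ℤ G β) ρQ := ⟨i, p, hi, hp, hinj, hsurj, hexact⟩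
  exact ⟨E.sha1EquivSha2 cocycles₁_le_coboundaries₁_permRep
    (fun _ => cocycles₁_le_coboundaries₁_permRep) sha2_permRep_eq_bot⟩

/-- Let `G` be a finite group and `0 → M → P → Q → 0` an exact sequence of finitely
generated `G`-modules with `P` a permutation module (free `ℤ`-module on a basis `β`
permuted by `G`). Then `Ш¹_ω(G, Q) ≅ Ш²_ω(G, M)` via the connecting homomorphism. -/
theorem sha1_iso_sha2_of_permutation_extension
    (G : Type) [Group G] [Finite G]
    (β : Type) [Fintype β] [MulAction G β]
    (VM VQ : Type) [AddCommGroup VM] [AddCommGroup VQ]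
    [Module.Finite ℤ VM] [Module.Finite ℤ VQ]
    (ρM : Representation ℤ G VM) (ρQ : Representation ℤ G VQ)
    (i : VM →ₗ[ℤ] (β →₀ ℤ)) (p : (β →₀ ℤ) →ₗ[ℤ] VQ)
    (hi : ∀ (g : G) (x : VM),
      i (ρM g x) = Finsupp.lmapDomain ℤ ℤ (g • ·) (i x))
    (hp : ∀ (g : G) (x : β →₀ ℤ),
      p (Finsupp.lmapDomain ℤ ℤ (g • ·) x) = ρQ g (p x))
    (hinj : Function.Injective i) (hsurj : Function.Surjective p)
    (hexact : LinearMap.range i = LinearMap.ker p) :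
    Nonempty (Sha1 (Rep.of ρQ) ≃ₗ[ℤ] Sha2 (Rep.of ρM)) :=
  sha1_iso_sha2_of_permutation_extension_general G β VM VQ ρM ρQ i p hi hp hinj hsurj hexact
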